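/- Let t = x₀x₁x₂ be a triangle in the Euclidean plane, let u : ℝ² → ℝ be an affine function with values uᵢ = u(xᵢ), and let φ₀ be the barycentric coordinate function of x₀. Then the local FEM stiffness identity holds: ∫_t ⟪∇u, ∇φ₀⟫ dx = −d₂·u₁ + (d₁ + d₂)·u₀ − d₁·u₂, where dᵢ = lⱼ·lₖ·cos θᵢ/(4|t|) for (i,j,k) a cyclic permutation of (0,1,2). -/

import Mathlib

/-!
The integrand is constant, so the left side is `|t| ⟪∇u, ∇φ₀⟫`. With `a = x₁ - x₀` and
`b = x₂ - x₀`, the gradient `w = ∇φ₀` is pinned down by `⟪w, a⟫ = ⟪w, b⟫ = -1`, which forces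
`(‖a‖²‖b‖² - ⟪a, b⟫²) w = ⟪b, a - b⟫ a + ⟪a, b - a⟫ b`; the two coefficients are, up to sign,
the products `lⱼ lₖ cos θᵢ` at `x₂` and `x₁`. The Gram determinant `‖a‖²‖b‖² - ⟪a, b⟫²` equals
`4 |t|²`, because `t` is the image of the standard triangle (area `1/2`) under an affine map whose
linear part has determinant `a × b`. Pairing the gradient formula with `∇u` gives the identity.
-/

open EuclideanGeometry Real MeasureTheory
open scoped RealInnerProductSpace Pointwise

theorem dist_mul_dist_mul_cos_angle {V P : Type*} [NormedAddCommGroup V] [InnerProductSpace ℝ V]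
    [MetricSpace P] [NormedAddTorsor V P] (p₁ p₂ p₃ : P) :
    dist p₁ p₂ * dist p₂ p₃ * Real.cos (∠ p₁ p₂ p₃) = ⟪p₁ -ᵥ p₂, p₃ -ᵥ p₂⟫ := by
  rw [dist_eq_norm_vsub V, dist_eq_norm_vsub' V, mul_comm,
    ← InnerProductGeometry.cos_angle_mul_norm_mul_norm]
  rfl

theorem linearIndependent_vsub_of_affineIndependent {k V P : Type*} [Ring k] [AddCommGroup V]
    [Module k V] [AddTorsor V P] {p₀ p₁ p₂ : P} (h : AffineIndependent k ![p₀, p₁, p₂]) :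
    LinearIndependent k ![p₁ -ᵥ p₀, p₂ -ᵥ p₀] := by
  convert ((affineIndependent_iff_linearIndependent_vsub k _ 0).mp h).comp
    (fun i : Fin 2 => (⟨i.succ, Fin.succ_ne_zero i⟩ : {x : Fin 3 // x ≠ 0}))
    (fun i j hij => Fin.succ_injective _ (congrArg Subtype.val hij)) using 1
  ext i
  fin_cases i <;> rfl

/-- In a plane, a vector is determined by its inner products with a basis `a, b`; those of both
sides with `a` and `b` are `-(‖a‖²‖b‖² - ⟪a, b⟫²)`. -/
theorem gram_smul_eq_of_inner_eq_neg_one {E : Type*} [NormedAddCommGroup E]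
    [InnerProductSpace ℝ E] (hE : Module.finrank ℝ E = 2) {a b w : E}
    (hab : LinearIndependent ℝ ![a, b]) (ha : ⟪w, a⟫ = -1) (hb : ⟪w, b⟫ = -1) :
    (‖a‖ ^ 2 * ‖b‖ ^ 2 - ⟪a, b⟫ ^ 2) • w = ⟪b, a - b⟫ • a + ⟪a, b - a⟫ • b := by
  let B := basisOfLinearIndependentOfCardEqFinrank hab (by simp [hE])
  apply InnerProductSpace.ext_inner_left_basis B
  intro i
  fin_cases i <;>
  · simp [B, inner_smul_right, inner_add_right, inner_sub_right, real_inner_comm w, ha, hb,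
      real_inner_comm a b]
    ring

theorem volume_setOf_nonneg_nonneg_add_le_one :
    volume {q : ℝ × ℝ | 0 ≤ q.1 ∧ 0 ≤ q.2 ∧ q.1 + q.2 ≤ 1} = ENNReal.ofReal (1 / 2) := by
  have hslice (x : ℝ) : volume (Prod.mk x ⁻¹' {q : ℝ × ℝ | 0 ≤ q.1 ∧ 0 ≤ q.2 ∧ q.1 + q.2 ≤ 1}) =
      (Set.Icc 0 1).indicator (fun x => ENNReal.ofReal (1 - x)) x := by
    by_cases hx : x ∈ Set.Icc (0 : ℝ) 1
    · have : Prod.mk x ⁻¹' {q : ℝ × ℝ | 0 ≤ q.1 ∧ 0 ≤ q.2 ∧ q.1 + q.2 ≤ 1} = Set.Icc 0 (1 - x) := by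
        ext y
        simp only [Set.mem_preimage, Set.mem_ofPred_eq, Set.mem_Icc]
        exact ⟨fun h => ⟨h.2.1, by linarith⟩, fun h => ⟨hx.1, h.1, by linarith⟩⟩
      rw [Set.indicator_of_mem hx, this, Real.volume_Icc, sub_zero]
    · have : Prod.mk x ⁻¹' {q : ℝ × ℝ | 0 ≤ q.1 ∧ 0 ≤ q.2 ∧ q.1 + q.2 ≤ 1} = ∅ := by
        ext y
        simp only [Set.mem_preimage, Set.mem_ofPred_eq, Set.mem_empty_iff_false, iff_false]
        rintro ⟨h0, h1, h2⟩
        exact hx ⟨h0, by linarith⟩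
      rw [Set.indicator_of_notMem hx, this, measure_empty]
  rw [Measure.volume_eq_prod, Measure.prod_apply (by measurability)]
  simp_rw [hslice]
  rw [lintegral_indicator measurableSet_Icc, ← ofReal_integral_eq_lintegral_ofReal,
    integral_Icc_eq_integral_Ioc, ← intervalIntegral.integral_of_le zero_le_one,
    intervalIntegral.integral_comp_sub_left (fun x => x)]
  · norm_num [integral_id]
  · exact (continuous_const.sub continuous_id).integrableOn_Icc
  · filter_upwards [ae_restrict_mem measurableSet_Icc] with x hx
    simpa using hx.2

def stdTriangle : Set (EuclideanSpace ℝ (Fin 2)) :=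
  {p | 0 ≤ p 0 ∧ 0 ≤ p 1 ∧ p 0 + p 1 ≤ 1}

theorem volume_stdTriangle : volume stdTriangle = ENNReal.ofReal (1 / 2) := by
  rw [← volume_setOf_nonneg_nonneg_add_le_one, ← ((volume_preserving_piFinTwo fun _ => ℝ).comp
    (PiLp.volume_preserving_ofLp (Fin 2))).measure_preimage (by measurability)]
  rfl

theorem convexHull_eq_stdTriangle :
    convexHull ℝ {0, EuclideanSpace.single 0 1, EuclideanSpace.single 1 1} = stdTriangle := by
  apply subset_antisymm
  · refine convexHull_min ?_ ?_
    · rintro p (rfl | rfl | rfl) <;> norm_num [stdTriangle]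
    · rintro p ⟨hp0, hp1, hp⟩ q ⟨hq0, hq1, hq⟩ a b ha hb hab
      simp only [stdTriangle, Set.mem_ofPred_eq, PiLp.add_apply, PiLp.smul_apply, smul_eq_mul]
      exact ⟨by positivity, by positivity, by nlinarith⟩
  · rintro p ⟨h0, h1, h01⟩
    have hp : p = ∑ i, ![1 - p 0 - p 1, p 0, p 1] i •
        ![0, EuclideanSpace.single 0 1, EuclideanSpace.single 1 1] i := by
      ext j
      fin_cases j <;> simp [Fin.sum_univ_three]
    rw [hp]
    refine (convex_convexHull ℝ _).sum_mem (fun i _ => ?_) (by simp [Fin.sum_univ_three]; ring)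
      (fun i _ => subset_convexHull ℝ _ ?_)
    · fin_cases i <;> simp <;> linarith
    · fin_cases i <;> simp

theorem volume_convexHull_triangle (x₀ x₁ x₂ : EuclideanSpace ℝ (Fin 2)) :
    volume (convexHull ℝ {x₀, x₁, x₂}) =
      ENNReal.ofReal (|(x₁ - x₀) 0 * (x₂ - x₀) 1 - (x₂ - x₀) 0 * (x₁ - x₀) 1| / 2) := by
  let B := (EuclideanSpace.basisFun (Fin 2) ℝ).toBasis
  let L := Matrix.toLin B B !![(x₁ - x₀) 0, (x₂ - x₀) 0; (x₁ - x₀) 1, (x₂ - x₀) 1]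
  have hL (i : Fin 2) : L (EuclideanSpace.single i 1) = ![x₁ - x₀, x₂ - x₀] i := by
    rw [← EuclideanSpace.basisFun_apply, ← OrthonormalBasis.coe_toBasis, Matrix.toLin_self]
    ext j
    fin_cases i <;> fin_cases j <;> simp [B]
  have hvertices : {x₀, x₁, x₂} =
      x₀ +ᵥ L '' {0, EuclideanSpace.single 0 1, EuclideanSpace.single 1 1} := by
    simp [Set.image_insert_eq, hL, Set.vadd_set_insert]
  rw [hvertices, convexHull_vadd, measure_vadd, ← LinearMap.image_convexHull,
    convexHull_eq_stdTriangle, Measure.addHaar_image_linearMap, LinearMap.det_toLin,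
    Matrix.det_fin_two_of, volume_stdTriangle, ← ENNReal.ofReal_mul (abs_nonneg _)]
  ring_nf

theorem four_mul_toReal_volume_triangle_sq (x₀ x₁ x₂ : EuclideanSpace ℝ (Fin 2)) :
    4 * (volume (convexHull ℝ {x₀, x₁, x₂})).toReal ^ 2 =
      ‖x₁ - x₀‖ ^ 2 * ‖x₂ - x₀‖ ^ 2 - ⟪x₁ - x₀, x₂ - x₀⟫ ^ 2 := by
  rw [volume_convexHull_triangle, ENNReal.toReal_ofReal (by positivity), div_pow, sq_abs,
    EuclideanSpace.norm_sq_eq, EuclideanSpace.norm_sq_eq]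
  simp [Fin.sum_univ_two, PiLp.inner_apply]
  ring

/-- Local FEM stiffness identity: for a triangle `t = x₀x₁x₂` in the Euclidean plane,
an affine function `u x = ⟪g, x⟫ + c` with values `uᵢ = u xᵢ`, and the barycentric
coordinate function `φ₀` of `x₀` (affine with gradient `gφ`, `φ₀ x₀ = 1`,
`φ₀ x₁ = φ₀ x₂ = 0`), we have
`∫_t ⟪∇u, ∇φ₀⟫ dx = -d₂ * u₁ + (d₁ + d₂) * u₀ - d₁ * u₂`,
where `dᵢ = lⱼ * lₖ * cos θᵢ / (4 * |t|)` for `(i,j,k)` a cyclic permutation of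
`(0,1,2)`. -/
theorem local_fem_stiffness_identity
    (x₀ x₁ x₂ : EuclideanSpace ℝ (Fin 2))
    (hind : AffineIndependent ℝ ![x₀, x₁, x₂])
    (g gφ : EuclideanSpace ℝ (Fin 2)) (c cφ : ℝ)
    (u φ₀ : EuclideanSpace ℝ (Fin 2) → ℝ)
    (hu : ∀ x, u x = ⟪g, x⟫ + c)
    (hφ : ∀ x, φ₀ x = ⟪gφ, x⟫ + cφ)
    (hφ₀ : φ₀ x₀ = 1) (hφ₁ : φ₀ x₁ = 0) (hφ₂ : φ₀ x₂ = 0) :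
    ∫ _x in convexHull ℝ {x₀, x₁, x₂}, ⟪g, gφ⟫ ∂volume =
      -(dist x₁ x₂ * dist x₀ x₂ * Real.cos (∠ x₀ x₂ x₁) /
          (4 * (volume (convexHull ℝ {x₀, x₁, x₂})).toReal)) * u x₁ +
      (dist x₀ x₁ * dist x₁ x₂ * Real.cos (∠ x₀ x₁ x₂) /
          (4 * (volume (convexHull ℝ {x₀, x₁, x₂})).toReal) +
        dist x₁ x₂ * dist x₀ x₂ * Real.cos (∠ x₀ x₂ x₁) /
          (4 * (volume (convexHull ℝ {x₀, x₁, x₂})).toReal)) * u x₀ -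
      dist x₀ x₁ * dist x₁ x₂ * Real.cos (∠ x₀ x₁ x₂) /
          (4 * (volume (convexHull ℝ {x₀, x₁, x₂})).toReal) * u x₂ := by
  have hφ_edge (x : EuclideanSpace ℝ (Fin 2)) (hx : φ₀ x = 0) : ⟪gφ, x - x₀⟫ = -1 := by
    rw [inner_sub_right]
    linarith [hφ x, hφ x₀]
  have hgrad := gram_smul_eq_of_inner_eq_neg_one finrank_euclideanSpace_fin
    (linearIndependent_vsub_of_affineIndependent hind) (hφ_edge x₁ hφ₁) (hφ_edge x₂ hφ₂)
  have harea := four_mul_toReal_volume_triangle_sq x₀ x₁ x₂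
  have hcos₁ := dist_mul_dist_mul_cos_angle x₀ x₁ x₂
  have hcos₂ := dist_mul_dist_mul_cos_angle x₀ x₂ x₁
  rw [dist_comm x₂ x₁, mul_comm (dist x₀ x₂)] at hcos₂
  rw [setIntegral_const, measureReal_def, smul_eq_mul, hcos₁, hcos₂, hu, hu, hu]
  set T := (volume (convexHull ℝ {x₀, x₁, x₂})).toReal
  rcases eq_or_ne T 0 with hT | hT
  · simp [hT]
  have hg := congrArg (⟪g, ·⟫) hgrad
  simp only [vsub_eq_sub, inner_smul_right, inner_add_right, inner_sub_left, inner_sub_right,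
    ← real_inner_self_eq_norm_sq, real_inner_comm x₀ x₁, real_inner_comm x₀ x₂,
    real_inner_comm x₁ x₂] at hg harea ⊢
  field_simp
  linear_combination hg + ⟪g, gφ⟫ * harea
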